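/- arXiv:1802.08732 — 4 statements merged into one kernel-verified Lean document; each statement's English description precedes it below -/
import Mathlib

section
/- Let R be an algebraic Kähler curvature tensor on a complex Hermitian vector space V with dim V ≥ 2, and let H(Z) = R(Z,Z̄,Z,Z̄). If the unit vector Z maximizes H over the unit sphere of V, then for every unit vector W orthogonal to Z one has H(Z) ≥ 2 R(Z,Z̄,W,W̄). -/
/-!
Write `H(X) = R(X, X̄, X, X̄)`. Since `Z` maximizes `H` on the unit sphere, `H(X) ≤ ‖X‖⁴ H(Z)` for
every `X`. Averaging `H(Z + cW)` over the four quarter turns `c = t, -t, it, -it` kills every term of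
the expansion except those of bidegree `(k, k)`, and the Kähler symmetries identify the four mixed
terms, so that
  `4 H(Z) + 16 t² R(Z, Z̄, W, W̄) + 4 t⁴ H(W) ≤ 4 (1 + t²)² H(Z)`.
Dividing by `t²` and letting `t → 0` gives `2 R(Z, Z̄, W, W̄) ≤ H(Z)`.
-/

open Complex ComplexConjugate Filter Topology

structure IsBisesquilinear {V : Type*} [AddCommGroup V] [Module ℂ V]
    (R : V → V → V → V → ℂ) : Prop where
  lin₁ : ∀ (a b : ℂ) (z z' w x y : V),
    R (a • z + b • z') w x y = a * R z w x y + b * R z' w x y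
  lin₃ : ∀ (a b : ℂ) (z w x x' y : V),
    R z w (a • x + b • x') y = a * R z w x y + b * R z w x' y
  conj₂ : ∀ (a b : ℂ) (z w w' x y : V),
    R z (a • w + b • w') x y = conj a * R z w x y + conj b * R z w' x y
  conj₄ : ∀ (a b : ℂ) (z w x y y' : V),
    R z w x (a • y + b • y') = conj a * R z w x y + conj b * R z w x y'

namespace IsBisesquilinear

variable {V : Type*} [AddCommGroup V] [Module ℂ V] {R : V → V → V → V → ℂ}

section Slots

variable (hR : IsBisesquilinear R) (c : ℂ) (z z' w w' x x' y y' : V)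
include hR

theorem add₁ : R (z + z') w x y = R z w x y + R z' w x y := by
  simpa using hR.lin₁ 1 1 z z' w x y

theorem add₂ : R z (w + w') x y = R z w x y + R z w' x y := by
  simpa using hR.conj₂ 1 1 z w w' x y

theorem add₃ : R z w (x + x') y = R z w x y + R z w x' y := by
  simpa using hR.lin₃ 1 1 z w x x' y

theorem add₄ : R z w x (y + y') = R z w x y + R z w x y' := by
  simpa using hR.conj₄ 1 1 z w x y y'

theorem smul₁ : R (c • z) w x y = c * R z w x y := by
  simpa using hR.lin₁ c 0 z 0 w x y

theorem smul₂ : R z (c • w) x y = conj c * R z w x y := by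
  simpa using hR.conj₂ c 0 z w 0 x y

theorem smul₃ : R z w (c • x) y = c * R z w x y := by
  simpa using hR.lin₃ c 0 z w x 0 y

theorem smul₄ : R z w x (c • y) = conj c * R z w x y := by
  simpa using hR.conj₄ c 0 z w x y 0

end Slots

theorem diag_real_smul (hR : IsBisesquilinear R) (r : ℝ) (x : V) :
    R ((r : ℂ) • x) ((r : ℂ) • x) ((r : ℂ) • x) ((r : ℂ) • x) = (r : ℂ) ^ 4 * R x x x x := by
  rw [hR.smul₁, hR.smul₂, hR.smul₃, hR.smul₄, conj_ofReal]
  ring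

theorem sum_quarter_turns (hR : IsBisesquilinear R) (z w : V) (t : ℝ) :
    ([(t : ℂ), -t, t * I, -(t * I)].map
        fun c => R (z + c • w) (z + c • w) (z + c • w) (z + c • w)).sum =
      4 * R z z z z + 4 * t ^ 2 * (R w w z z + R w z z w + R z w w z + R z z w w) +
        4 * t ^ 4 * R w w w w := by
  simp only [List.map_cons, List.map_nil, List.sum_cons, List.sum_nil, hR.add₁, hR.add₂, hR.add₃,
    hR.add₄, hR.smul₁, hR.smul₂, hR.smul₃, hR.smul₄, map_mul, map_neg, conj_ofReal, conj_I]
  ring_nf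
  simp only [I_sq, I_pow_four]
  ring_nf

end IsBisesquilinear

theorem mixed_sum_eq_of_symm {V : Type*} {R : V → V → V → V → ℂ}
    (hpair : ∀ z w x y : V, R z w x y = R x y z w) (hsym13 : ∀ z w x y : V, R z w x y = R x w z y)
    (z w : V) : R w w z z + R w z z w + R z w w z + R z z w w = 4 * R z z w w := by
  rw [hpair w w z z, hsym13 w z z w, hpair z w w z, hsym13 w z z w]
  ring

theorem le_zero_of_forall_ne_zero_le_sq_mul {a b : ℝ} (h : ∀ t : ℝ, t ≠ 0 → a ≤ t ^ 2 * b) :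
    a ≤ 0 := by
  have hlim : Tendsto (fun t : ℝ => t ^ 2 * b) (𝓝[≠] 0) (𝓝 0) := by
    have := ((continuous_pow 2).mul continuous_const).tendsto (0 : ℝ) (f := fun t : ℝ => t ^ 2 * b)
    simpa using this.mono_left nhdsWithin_le_nhds
  exact ge_of_tendsto hlim (eventually_nhdsWithin_of_forall h)

namespace IsBisesquilinear

variable {V : Type*} [NormedAddCommGroup V] [InnerProductSpace ℂ V] {R : V → V → V → V → ℂ}

theorem re_diag_le_of_isMax (hR : IsBisesquilinear R) {z : V}
    (hmax : ∀ u : V, ‖u‖ = 1 → (R u u u u).re ≤ (R z z z z).re) (x : V) :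
    (R x x x x).re ≤ ‖x‖ ^ 4 * (R z z z z).re := by
  rcases eq_or_ne x 0 with rfl | hx
  · have h0 : R 0 0 0 0 = 0 := by simpa using hR.diag_real_smul 0 0
    simp [h0]
  · have hscale := hR.diag_real_smul ‖x‖ ((‖x‖ : ℂ)⁻¹ • x)
    rw [smul_inv_smul₀ (by exact_mod_cast norm_ne_zero_iff.mpr hx), ← ofReal_pow] at hscale
    rw [hscale, re_ofReal_mul]
    exact mul_le_mul_of_nonneg_left (hmax _ (norm_smul_inv_norm hx)) (by positivity)

theorem quarter_turn_bound (hR : IsBisesquilinear R)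
    (hpair : ∀ z w x y : V, R z w x y = R x y z w) (hsym13 : ∀ z w x y : V, R z w x y = R x w z y)
    {z w : V} (hz : ‖z‖ = 1) (hw : ‖w‖ = 1) (horth : inner ℂ z w = 0)
    (hmax : ∀ u : V, ‖u‖ = 1 → (R u u u u).re ≤ (R z z z z).re) (t : ℝ) :
    16 * t ^ 2 * (R z z w w).re + 4 * t ^ 4 * (R w w w w).re ≤
      8 * t ^ 2 * (R z z z z).re + 4 * t ^ 4 * (R z z z z).re := by
  have hsum := congrArg re (hR.sum_quarter_turns z w t)
  rw [mixed_sum_eq_of_symm hpair hsym13] at hsum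
  have hnorm (c : ℂ) : ‖z + c • w‖ ^ 2 = 1 + ‖c‖ ^ 2 := by
    have := norm_add_sq_eq_norm_sq_add_norm_sq_of_inner_eq_zero z (c • w)
      (by rw [inner_smul_right, horth, mul_zero])
    rw [norm_smul, hz, hw] at this
    linear_combination this
  have hbound (c : ℂ) (hc : ‖c‖ = ‖t‖) :
      (R (z + c • w) (z + c • w) (z + c • w) (z + c • w)).re ≤ (1 + t ^ 2) ^ 2 * (R z z z z).re :=
    calc _ ≤ ‖z + c • w‖ ^ 4 * (R z z z z).re := hR.re_diag_le_of_isMax hmax _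
      _ = (1 + t ^ 2) ^ 2 * (R z z z z).re := by
        rw [show ‖z + c • w‖ ^ 4 = (‖z + c • w‖ ^ 2) ^ 2 by ring, hnorm, hc, Real.norm_eq_abs, sq_abs]
  have h₁ := hbound t (norm_real t)
  have h₂ := hbound (-t) (by rw [norm_neg, norm_real])
  have h₃ := hbound (t * I) (by rw [norm_mul, norm_I, mul_one, norm_real])
  have h₄ := hbound (-(t * I)) (by rw [norm_neg, norm_mul, norm_I, mul_one, norm_real])
  have hre : (4 * R z z z z + 4 * t ^ 2 * (4 * R z z w w) + 4 * t ^ 4 * R w w w w).re =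
      4 * (R z z z z).re + 16 * t ^ 2 * (R z z w w).re + 4 * t ^ 4 * (R w w w w).re := by
    rw [← ofReal_pow, ← ofReal_pow]
    simp only [add_re, mul_re, mul_im, re_ofNat, im_ofNat, ofReal_re, ofReal_im]
    ring
  simp only [List.map_cons, List.map_nil, List.sum_cons, List.sum_nil, add_zero, add_re, hre] at hsum
  linarith

end IsBisesquilinear

theorem stmt_1_general {V : Type*} [NormedAddCommGroup V] [InnerProductSpace ℂ V]
    (R : V → V → V → V → ℂ)
    (hlin1 : ∀ (a b : ℂ) (z z' w x y : V),
      R (a • z + b • z') w x y = a * R z w x y + b * R z' w x y)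
    (hlin3 : ∀ (a b : ℂ) (z w x x' y : V),
      R z w (a • x + b • x') y = a * R z w x y + b * R z w x' y)
    (hconj2 : ∀ (a b : ℂ) (z w w' x y : V),
      R z (a • w + b • w') x y
        = (starRingEnd ℂ a) * R z w x y + (starRingEnd ℂ b) * R z w' x y)
    (hconj4 : ∀ (a b : ℂ) (z w x y y' : V),
      R z w x (a • y + b • y')
        = (starRingEnd ℂ a) * R z w x y + (starRingEnd ℂ b) * R z w x y')
    (hpair : ∀ z w x y : V, R z w x y = R x y z w)
    (hsym13 : ∀ z w x y : V, R z w x y = R x w z y)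
    (Z : V) (hZ : ‖Z‖ = 1)
    (hmax : ∀ W : V, ‖W‖ = 1 → (R W W W W).re ≤ (R Z Z Z Z).re)
    (W : V) (hW : ‖W‖ = 1) (horth : (inner ℂ Z W : ℂ) = 0) :
    2 * (R Z Z W W).re ≤ (R Z Z Z Z).re := by
  have hR : IsBisesquilinear R := ⟨hlin1, hlin3, hconj2, hconj4⟩
  have hbound := hR.quarter_turn_bound hpair hsym13 hZ hW horth hmax
  suffices 2 * (2 * (R Z Z W W).re - (R Z Z Z Z).re) ≤ 0 by linarith
  refine le_zero_of_forall_ne_zero_le_sq_mul (b := (R Z Z Z Z).re - (R W W W W).re) fun t ht => ?_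
  have ht2 : 0 < t ^ 2 := by positivity
  nlinarith [hbound t]

/-- if a unit vector `Z` maximizes the holomorphic sectional
curvature `H(Z) = R(Z,Z̄,Z,Z̄)` of an algebraic Kähler curvature tensor over the
unit sphere, then `H(Z) ≥ 2 R(Z,Z̄,W,W̄)` for every unit `W ⟂ Z`. -/
theorem stmt_1 {V : Type*} [NormedAddCommGroup V] [InnerProductSpace ℂ V]
    (hdim : 2 ≤ Module.finrank ℂ V)
    (R : V → V → V → V → ℂ)
    (hlin1 : ∀ (a b : ℂ) (z z' w x y : V),
      R (a • z + b • z') w x y = a * R z w x y + b * R z' w x y)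
    (hlin3 : ∀ (a b : ℂ) (z w x x' y : V),
      R z w (a • x + b • x') y = a * R z w x y + b * R z w x' y)
    (hconj2 : ∀ (a b : ℂ) (z w w' x y : V),
      R z (a • w + b • w') x y
        = (starRingEnd ℂ a) * R z w x y + (starRingEnd ℂ b) * R z w' x y)
    (hconj4 : ∀ (a b : ℂ) (z w x y y' : V),
      R z w x (a • y + b • y')
        = (starRingEnd ℂ a) * R z w x y + (starRingEnd ℂ b) * R z w x y')
    (hpair : ∀ z w x y : V, R z w x y = R x y z w)
    (hsym13 : ∀ z w x y : V, R z w x y = R x w z y)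
    (hreal : ∀ v : V, (R v v v v).im = 0)
    (Z : V) (hZ : ‖Z‖ = 1)
    (hmax : ∀ W : V, ‖W‖ = 1 → (R W W W W).re ≤ (R Z Z Z Z).re)
    (W : V) (hW : ‖W‖ = 1) (horth : (inner ℂ Z W : ℂ) = 0) :
    2 * (R Z Z W W).re ≤ (R Z Z Z Z).re :=
  stmt_1_general R hlin1 hlin3 hconj2 hconj4 hpair hsym13 Z hZ hmax W hW horth
end

section
/- Let R be an algebraic Kähler curvature tensor on a complex Hermitian vector space V with dim V = m ≥ 2 and suppose the unit vector Z minimizes H(W) = R(W,W̄,W,W̄) over unit vectors W. Then H(Z) ≤ (2/(m−1)) · Ric⊥(Z,Z̄), where Ric⊥(Z,Z̄) = Σ_{j=2}^{m} R(Z,Z̄,E_j,Ē_j) for any orthonormal basis {E_1 = Z, E_2, …, E_m} of V. -/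
open Complex Finset Filter

/-!
Minimality of `H(W) = R(W,W̄,W,W̄)` at `Z` gives `H(Z + tW) ≥ H(Z) ‖Z + tW‖⁴` for all `t ∈ ℂ`.
For a unit `W ⊥ Z`, averaging over `t = iᵏx` (`k = 0,…,3`) kills every term of the expansion except
those of bidegree `(0,0)`, `(1,1)`, `(2,2)` in `(t, t̄)`, leaving `0 ≤ (16 R(Z,Z̄,W,W̄) - 8 H(Z)) x² + O(x⁴)`,
so `H(Z) ≤ 2 R(Z,Z̄,W,W̄)`. Summing over `W = E₂, …, E_m` gives the bound.
-/

theorem nonneg_of_forall_nonneg_mul_sq_add_mul_pow_four {b d : ℝ}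
    (h : ∀ x : ℝ, 0 ≤ b * x ^ 2 + d * x ^ 4) : 0 ≤ b := by
  have hpos : ∀ x : ℝ, 0 < x → 0 ≤ b + d * x ^ 2 := fun x hx =>
    nonneg_of_mul_nonneg_right (by nlinarith [h x]) (pow_pos hx 2)
  have hlim : Tendsto (fun x : ℝ => b + d * x ^ 2) (nhdsWithin 0 (Set.Ioi 0)) (nhds b) := by
    have hcont : Continuous fun x : ℝ => b + d * x ^ 2 := by fun_prop
    simpa using (hcont.tendsto 0).mono_left nhdsWithin_le_nhds
  exact ge_of_tendsto hlim (eventually_nhdsWithin_of_forall hpos)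

theorem norm_add_smul_sq_of_inner_eq_zero {V : Type*} [NormedAddCommGroup V]
    [InnerProductSpace ℂ V] {Z W : V} (horth : inner ℂ Z W = 0) (c : ℂ) :
    ‖Z + c • W‖ ^ 2 = ‖Z‖ ^ 2 + ‖c‖ ^ 2 * ‖W‖ ^ 2 := by
  rw [sq, norm_add_sq_eq_norm_sq_add_norm_sq_of_inner_eq_zero Z (c • W)
    (by rw [inner_smul_right, horth, mul_zero]), norm_smul]
  ring

structure IsBiSesquilinear {V : Type*} [AddCommGroup V] [Module ℂ V]
    (R : V → V → V → V → ℂ) : Prop where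
  add_smul_first : ∀ (a b : ℂ) (z z' w x y : V),
    R (a • z + b • z') w x y = a * R z w x y + b * R z' w x y
  add_smul_second : ∀ (a b : ℂ) (z w w' x y : V),
    R z (a • w + b • w') x y = starRingEnd ℂ a * R z w x y + starRingEnd ℂ b * R z w' x y
  add_smul_third : ∀ (a b : ℂ) (z w x x' y : V),
    R z w (a • x + b • x') y = a * R z w x y + b * R z w x' y
  add_smul_fourth : ∀ (a b : ℂ) (z w x y y' : V),
    R z w x (a • y + b • y') = starRingEnd ℂ a * R z w x y + starRingEnd ℂ b * R z w x y'

namespace IsBiSesquilinear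

section Module

variable {V : Type*} [AddCommGroup V] [Module ℂ V] {R : V → V → V → V → ℂ}

theorem apply_smul_self (hR : IsBiSesquilinear R) (r : ℝ) (v : V) :
    R ((r : ℂ) • v) ((r : ℂ) • v) ((r : ℂ) • v) ((r : ℂ) • v) = (r : ℂ) ^ 4 * R v v v v := by
  have hsmul : (r : ℂ) • v = (r : ℂ) • v + (0 : ℂ) • v := by rw [zero_smul, add_zero]
  rw [hsmul]
  simp only [hR.add_smul_first, hR.add_smul_second, hR.add_smul_third, hR.add_smul_fourth,
    conj_ofReal, map_zero]
  ring

theorem sum_fourth_roots (hR : IsBiSesquilinear R) (Z W : V) (x : ℝ) :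
    ∑ k ∈ range 4, R (Z + (I ^ k * x) • W) (Z + (I ^ k * x) • W) (Z + (I ^ k * x) • W)
        (Z + (I ^ k * x) • W)
      = 4 * R Z Z Z Z + 4 * x ^ 2 * (R W W Z Z + R W Z Z W + R Z W W Z + R Z Z W W)
        + 4 * x ^ 4 * R W W W W := by
  have hZ : ∀ c : ℂ, Z + c • W = (1 : ℂ) • Z + c • W := fun c => by rw [one_smul]
  simp only [sum_range_succ, sum_range_zero, pow_zero, pow_one, I_sq, I_pow_three, hZ,
    hR.add_smul_first, hR.add_smul_second, hR.add_smul_third, hR.add_smul_fourth,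
    map_one, map_mul, map_neg, conj_ofReal, conj_I]
  ring_nf
  simp only [I_sq, I_pow_four]
  ring

end Module

section InnerProductSpace

variable {V : Type*} [NormedAddCommGroup V] [InnerProductSpace ℂ V] {R : V → V → V → V → ℂ}

theorem mul_norm_pow_four_le_re_apply_self (hR : IsBiSesquilinear R) {A : ℝ}
    (hmin : ∀ W : V, ‖W‖ = 1 → A ≤ (R W W W W).re) (v : V) :
    A * ‖v‖ ^ 4 ≤ (R v v v v).re := by
  rcases eq_or_ne v 0 with rfl | hv
  · simpa using (congrArg re (hR.apply_smul_self 0 (0 : V))).ge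
  have hnorm : 0 < ‖v‖ := norm_pos_iff.mpr hv
  set u : V := ((‖v‖⁻¹ : ℝ) : ℂ) • v
  have hu : ‖u‖ = 1 := by simp [u, norm_smul, hnorm.ne']
  have hv_eq : v = ((‖v‖ : ℝ) : ℂ) • u := by
    simp only [u, smul_smul, ← ofReal_mul, mul_inv_cancel₀ hnorm.ne', ofReal_one, one_smul]
  rw [hv_eq, hR.apply_smul_self, ← ofReal_pow, re_ofReal_mul, norm_smul, hu, mul_one, norm_real,
    Real.norm_of_nonneg hnorm.le, mul_comm]
  exact mul_le_mul_of_nonneg_left (hmin u hu) (by positivity)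

theorem re_apply_self_le_two_mul_re_apply (hR : IsBiSesquilinear R)
    (hpair : ∀ z w x y : V, R z w x y = R x y z w)
    (hsym13 : ∀ z w x y : V, R z w x y = R x w z y)
    {Z W : V} (hZ : ‖Z‖ = 1) (hmin : ∀ W : V, ‖W‖ = 1 → (R Z Z Z Z).re ≤ (R W W W W).re)
    (hW : ‖W‖ = 1) (horth : inner ℂ Z W = 0) :
    (R Z Z Z Z).re ≤ 2 * (R Z Z W W).re := by
  set A := (R Z Z Z Z).re
  have hmixed : R W W Z Z + R W Z Z W + R Z W W Z + R Z Z W W = 4 * R Z Z W W := by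
    rw [hsym13 Z W W Z, hsym13 W Z Z W, hpair W W Z Z]
    ring
  have hquartic : ∀ x : ℝ, 0 ≤ (16 * (R Z Z W W).re - 8 * A) * x ^ 2
      + (4 * (R W W W W).re - 4 * A) * x ^ 4 := by
    intro x
    have hroot : ∀ k ∈ range 4, A * (1 + x ^ 2) ^ 2 ≤
        (R (Z + (I ^ k * x) • W) (Z + (I ^ k * x) • W) (Z + (I ^ k * x) • W)
          (Z + (I ^ k * x) • W)).re := by
      intro k _
      have hnorm := norm_add_smul_sq_of_inner_eq_zero horth (I ^ k * x)
      rw [hZ, hW, one_pow, mul_one, norm_mul, norm_pow, norm_I, one_pow, one_mul, norm_real, Real.norm_eq_abs,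
        sq_abs] at hnorm
      calc A * (1 + x ^ 2) ^ 2 = A * ‖Z + (I ^ k * x) • W‖ ^ 4 := by rw [← hnorm]; ring
        _ ≤ _ := mul_norm_pow_four_le_re_apply_self hR hmin _
    have hsum := congrArg re (hR.sum_fourth_roots Z W x)
    have hle := sum_le_sum hroot
    rw [← re_sum, hsum, hmixed] at hle
    simp only [sum_const, card_range, nsmul_eq_mul, Nat.cast_ofNat, ← ofReal_pow, add_re,
      mul_re, mul_im, re_ofNat, im_ofNat, ofReal_re, ofReal_im, zero_mul, mul_zero, sub_zero,
      add_zero] at hle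
    linarith
  linarith [nonneg_of_forall_nonneg_mul_sq_add_mul_pow_four hquartic]

end InnerProductSpace

end IsBiSesquilinear

/-- if a unit vector `Z` minimizes the holomorphic sectional
curvature, then `H(Z) ≤ (2/(m-1)) Ric⊥(Z,Z̄)`. -/
theorem stmt_2 {V : Type*} [NormedAddCommGroup V] [InnerProductSpace ℂ V]
    (m : ℕ) (hm : 2 ≤ m)
    (R : V → V → V → V → ℂ)
    (hlin1 : ∀ (a b : ℂ) (z z' w x y : V),
      R (a • z + b • z') w x y = a * R z w x y + b * R z' w x y)
    (hlin3 : ∀ (a b : ℂ) (z w x x' y : V),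
      R z w (a • x + b • x') y = a * R z w x y + b * R z w x' y)
    (hconj2 : ∀ (a b : ℂ) (z w w' x y : V),
      R z (a • w + b • w') x y
        = (starRingEnd ℂ a) * R z w x y + (starRingEnd ℂ b) * R z w' x y)
    (hconj4 : ∀ (a b : ℂ) (z w x y y' : V),
      R z w x (a • y + b • y')
        = (starRingEnd ℂ a) * R z w x y + (starRingEnd ℂ b) * R z w x y')
    (hpair : ∀ z w x y : V, R z w x y = R x y z w)
    (hsym13 : ∀ z w x y : V, R z w x y = R x w z y)
    (Z : V) (hZ : ‖Z‖ = 1)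
    (hmin : ∀ W : V, ‖W‖ = 1 → (R Z Z Z Z).re ≤ (R W W W W).re)
    (E : OrthonormalBasis (Fin m) ℂ V) (hE0 : E ⟨0, by omega⟩ = Z) :
    (R Z Z Z Z).re
      ≤ (2 / (m - 1 : ℝ)) * ∑ j ∈ Finset.univ \ {(⟨0, by omega⟩ : Fin m)},
          (R Z Z (E j) (E j)).re := by
  have hR : IsBiSesquilinear R := ⟨hlin1, hconj2, hlin3, hconj4⟩
  have hterm : ∀ j ∈ univ \ {(⟨0, by omega⟩ : Fin m)},
      (R Z Z Z Z).re ≤ 2 * (R Z Z (E j) (E j)).re := by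
    intro j hj
    have hj0 : (⟨0, by omega⟩ : Fin m) ≠ j := fun h =>
      (mem_sdiff.mp hj).2 (mem_singleton.mpr h.symm)
    exact hR.re_apply_self_le_two_mul_re_apply hpair hsym13 hZ hmin (E.orthonormal.1 j)
      (hE0 ▸ E.orthonormal.2 hj0)
  have hsum := card_nsmul_le_sum _ _ _ hterm
  have hm1 : (1 : ℝ) < m := by exact_mod_cast hm
  rw [card_sdiff_of_subset (subset_univ _), card_singleton, card_univ, Fintype.card_fin,
    nsmul_eq_mul, Nat.cast_sub (by omega), Nat.cast_one, ← mul_sum] at hsum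
  rw [div_mul_eq_mul_div, le_div_iff₀ (by linarith)]
  linarith
end

section
/- Let ξ : [0,∞) → ℝ be continuous with ξ(0) = 0, 0 < ξ(r) < 1 for r > 0, ξ nondecreasing, and lim_{r→∞} ξ(r) = a with 0 < a < 1. Let h(r) = exp(−∫₀^r ξ(s)/s ds) (assuming ∫₀^1 ξ(s)/s ds < ∞). Then lim_{r→∞} h(r) = 0, lim_{r→∞} ∫₀^r h(s) ds = ∞, and lim_{r→∞} (r·h(r)) / (∫₀^r h(s) ds) = 1 − a. -/
open Real Filter MeasureTheory intervalIntegral Asymptotics Set Topology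

/-!
Write `h = exp (-F)` with `F r = ∫₀^r ξ(s)/s ds`. On `[1, ∞)` the bounds `ξ 1 ≤ ξ ≤ a` give
`h 1 * r ^ (-a) ≤ h r ≤ h 1 * r ^ (-ξ 1)`, so `h → 0` and, as `a < 1`, `∫₀^r h → ∞`.
Since `(r h)' = (1 - ξ) h`, the quotient `r h(r) / ∫₀^r h` is the mean of `1 - ξ` on `[0, r]`
against the weight `h`, whose total mass diverges; such means converge to `lim (1 - ξ) = 1 - a`
by the continuous analogue of Cesàro's theorem.
-/

theorem Asymptotics.IsLittleO.intervalIntegral_atTop {E : Type*} [NormedAddCommGroup E]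
    [NormedSpace ℝ E] {f : ℝ → E} {g : ℝ → ℝ} {c : ℝ} (h : f =o[atTop] g)
    (hg : ∀ s, c ≤ s → 0 ≤ g s) (hfi : ∀ r, c ≤ r → IntervalIntegrable f volume c r)
    (hgi : ∀ r, c ≤ r → IntervalIntegrable g volume c r)
    (h'g : Tendsto (fun r => ∫ s in c..r, g s) atTop atTop) :
    (fun r => ∫ s in c..r, f s) =o[atTop] fun r => ∫ s in c..r, g s := by
  refine isLittleO_iff.2 fun ε hε => ?_
  obtain ⟨N, hcN, hN⟩ : ∃ N, c ≤ N ∧ ∀ s, N ≤ s → ‖f s‖ ≤ ε / 2 * g s := by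
    obtain ⟨N, hN⟩ := eventually_atTop.1
      ((isLittleO_iff.1 h (half_pos hε)).and (eventually_ge_atTop c))
    refine ⟨max N c, le_max_right _ _, fun s hs => ?_⟩
    obtain ⟨hfs, hcs⟩ := hN s (le_of_max_le_left hs)
    rwa [Real.norm_of_nonneg (hg s hcs)] at hfs
  have hhead : (fun _ : ℝ => ∫ s in c..N, f s) =o[atTop] fun r => ∫ s in c..r, g s :=
    isLittleO_const_left.2 (Or.inr (tendsto_norm_atTop_atTop.comp h'g))
  filter_upwards [isLittleO_iff.1 hhead (half_pos hε), eventually_ge_atTop N] with r hr hNr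
  have hNri : IntervalIntegrable g volume N r := (hgi N hcN).symm.trans (hgi r (hcN.trans hNr))
  have htail : ‖∫ s in N..r, f s‖ ≤ ε / 2 * ∫ s in c..r, g s := calc
    ‖∫ s in N..r, f s‖ ≤ ∫ s in N..r, ε / 2 * g s :=
      norm_integral_le_of_norm_le hNr (ae_of_all _ fun s hs => hN s hs.1.le) (hNri.const_mul _)
    _ = ε / 2 * ∫ s in N..r, g s := integral_const_mul _ _
    _ ≤ ε / 2 * ∫ s in c..r, g s := by
      gcongr
      rw [← integral_add_adjacent_intervals (hgi N hcN) hNri]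
      exact le_add_of_nonneg_left (integral_nonneg hcN fun s hs => hg s hs.1)
  rw [← integral_add_adjacent_intervals (hfi N hcN)
    ((hfi N hcN).symm.trans (hfi r (hcN.trans hNr)))]
  calc ‖(∫ s in c..N, f s) + ∫ s in N..r, f s‖
      ≤ ‖∫ s in c..N, f s‖ + ‖∫ s in N..r, f s‖ := norm_add_le _ _
    _ ≤ ε / 2 * ‖∫ s in c..r, g s‖ + ε / 2 * ‖∫ s in c..r, g s‖ := by
      gcongr
      exact htail.trans (by gcongr; exact Real.le_norm_self _)
    _ = ε * ‖∫ s in c..r, g s‖ := by ring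

theorem Filter.Tendsto.integral_mul_div_integral {φ g : ℝ → ℝ} {c L : ℝ}
    (hφ : Tendsto φ atTop (𝓝 L)) (hg : ∀ s, c ≤ s → 0 ≤ g s)
    (hφgi : ∀ r, c ≤ r → IntervalIntegrable (fun s => φ s * g s) volume c r)
    (hgi : ∀ r, c ≤ r → IntervalIntegrable g volume c r)
    (h'g : Tendsto (fun r => ∫ s in c..r, g s) atTop atTop) :
    Tendsto (fun r => (∫ s in c..r, φ s * g s) / ∫ s in c..r, g s) atTop (𝓝 L) := by
  have hsmall : (fun s => (φ s - L) * g s) =o[atTop] g := by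
    simpa using ((isLittleO_one_iff ℝ).2 (tendsto_sub_nhds_zero_iff.2 hφ)).mul_isBigO
      (isBigO_refl g atTop)
  have hsmalli : ∀ r, c ≤ r → IntervalIntegrable (fun s => (φ s - L) * g s) volume c r := by
    intro r hr
    simpa only [sub_mul] using (hφgi r hr).sub ((hgi r hr).const_mul L)
  rw [← tendsto_sub_nhds_zero_iff]
  refine ((hsmall.intervalIntegral_atTop hg hsmalli hgi h'g).tendsto_div_nhds_zero).congr' ?_
  filter_upwards [h'g.eventually_gt_atTop 0, eventually_ge_atTop c] with r hpos hcr
  simp only [sub_mul]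
  rw [integral_sub (hφgi r hcr) ((hgi r hcr).const_mul L), intervalIntegral.integral_const_mul]
  field_simp

theorem integral_const_div_self (c : ℝ) {r : ℝ} (hr : 0 < r) :
    ∫ s in (1:ℝ)..r, c / s = c * log r := by
  simp only [div_eq_mul_inv, intervalIntegral.integral_const_mul, integral_inv_of_pos one_pos hr,
    inv_one, mul_one]

theorem intervalIntegrable_const_div_self (c : ℝ) {r : ℝ} (hr : 1 ≤ r) :
    IntervalIntegrable (fun s => c / s) volume 1 r :=
  (continuousOn_const.div continuousOn_id fun _ hs =>
    (one_pos.trans_le hs.1).ne').intervalIntegrable_of_Icc hr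

theorem mul_log_le_integral_div_self {φ : ℝ → ℝ} {c r : ℝ} (hr : 1 ≤ r)
    (hφ : IntervalIntegrable (fun s => φ s / s) volume 1 r) (hc : ∀ s ∈ Icc 1 r, c ≤ φ s) :
    c * log r ≤ ∫ s in (1:ℝ)..r, φ s / s := by
  rw [← integral_const_div_self c (one_pos.trans_le hr)]
  exact integral_mono_on hr (intervalIntegrable_const_div_self c hr) hφ fun s hs =>
    div_le_div_of_nonneg_right (hc s hs) (zero_le_one.trans hs.1)

theorem integral_div_self_le_mul_log {φ : ℝ → ℝ} {d r : ℝ} (hr : 1 ≤ r)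
    (hφ : IntervalIntegrable (fun s => φ s / s) volume 1 r) (hd : ∀ s ∈ Icc 1 r, φ s ≤ d) :
    ∫ s in (1:ℝ)..r, φ s / s ≤ d * log r := by
  rw [← integral_const_div_self d (one_pos.trans_le hr)]
  exact integral_mono_on hr hφ (intervalIntegrable_const_div_self d hr) fun s hs =>
    div_le_div_of_nonneg_right (hd s hs) (zero_le_one.trans hs.1)

section expNegIntegral

variable {ξ : ℝ → ℝ} {r : ℝ}

noncomputable def expNegIntegral (ξ : ℝ → ℝ) (r : ℝ) : ℝ :=
  exp (-∫ s in (0:ℝ)..r, ξ s / s)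

theorem expNegIntegral_pos : 0 < expNegIntegral ξ r := exp_pos _

theorem continuousOn_div_self (hcont : ContinuousOn ξ (Ici 0)) :
    ContinuousOn (fun s => ξ s / s) (Ioi 0) :=
  (hcont.mono Ioi_subset_Ici_self).div continuousOn_id fun _ hs => ne_of_gt hs

theorem intervalIntegrable_div_self (hcont : ContinuousOn ξ (Ici 0))
    (hint : IntervalIntegrable (fun s => ξ s / s) volume 0 1) (hr : 0 ≤ r) :
    IntervalIntegrable (fun s => ξ s / s) volume 0 r := by
  have h1r : IntervalIntegrable (fun s => ξ s / s) volume 1 (max r 1) :=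
    ((continuousOn_div_self hcont).mono fun s hs => one_pos.trans_le hs.1).intervalIntegrable_of_Icc
      (le_max_right r 1)
  refine (hint.trans h1r).mono_set ?_
  rw [uIcc_of_le hr, uIcc_of_le (zero_le_one.trans (le_max_right r 1))]
  exact Icc_subset_Icc_right (le_max_left r 1)

theorem hasDerivAt_integral_div_self (hcont : ContinuousOn ξ (Ici 0))
    (hint : IntervalIntegrable (fun s => ξ s / s) volume 0 1) (hr : 0 < r) :
    HasDerivAt (fun t => ∫ s in (0:ℝ)..t, ξ s / s) (ξ r / r) r :=
  integral_hasDerivAt_right (intervalIntegrable_div_self hcont hint hr.le)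
    ((continuousOn_div_self hcont).stronglyMeasurableAtFilter isOpen_Ioi r hr)
    ((continuousOn_div_self hcont).continuousAt (Ioi_mem_nhds hr))

theorem continuousOn_expNegIntegral (hcont : ContinuousOn ξ (Ici 0))
    (hint : IntervalIntegrable (fun s => ξ s / s) volume 0 1) (hr : 0 ≤ r) :
    ContinuousOn (expNegIntegral ξ) (Icc 0 r) := by
  have hF := continuousOn_primitive_interval' (intervalIntegrable_div_self hcont hint hr)
    left_mem_uIcc
  rw [uIcc_of_le hr] at hF
  exact hF.neg.rexp

theorem intervalIntegrable_expNegIntegral (hcont : ContinuousOn ξ (Ici 0))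
    (hint : IntervalIntegrable (fun s => ξ s / s) volume 0 1) (hr : 0 ≤ r) :
    IntervalIntegrable (expNegIntegral ξ) volume 0 r :=
  (continuousOn_expNegIntegral hcont hint hr).intervalIntegrable_of_Icc hr

theorem intervalIntegrable_one_sub_mul_expNegIntegral (hcont : ContinuousOn ξ (Ici 0))
    (hint : IntervalIntegrable (fun s => ξ s / s) volume 0 1) (hr : 0 ≤ r) :
    IntervalIntegrable (fun s => (1 - ξ s) * expNegIntegral ξ s) volume 0 r :=
  ((continuousOn_const.sub (hcont.mono Icc_subset_Ici_self)).mul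
    (continuousOn_expNegIntegral hcont hint hr)).intervalIntegrable_of_Icc hr

theorem hasDerivAt_mul_expNegIntegral (hcont : ContinuousOn ξ (Ici 0))
    (hint : IntervalIntegrable (fun s => ξ s / s) volume 0 1) (hr : 0 < r) :
    HasDerivAt (fun t => t * expNegIntegral ξ t) ((1 - ξ r) * expNegIntegral ξ r) r := by
  have hE : HasDerivAt (expNegIntegral ξ) (expNegIntegral ξ r * -(ξ r / r)) r :=
    (hasDerivAt_integral_div_self hcont hint hr).neg.exp
  refine ((hasDerivAt_id' r).mul hE).congr_deriv ?_
  field_simp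
  ring

theorem mul_expNegIntegral_eq_integral (hcont : ContinuousOn ξ (Ici 0))
    (hint : IntervalIntegrable (fun s => ξ s / s) volume 0 1) (hr : 0 ≤ r) :
    r * expNegIntegral ξ r = ∫ s in (0:ℝ)..r, (1 - ξ s) * expNegIntegral ξ s := by
  rw [integral_eq_sub_of_hasDerivAt_of_le hr
    (continuousOn_id.mul (continuousOn_expNegIntegral hcont hint hr))
    (fun s hs => hasDerivAt_mul_expNegIntegral hcont hint hs.1)
    (intervalIntegrable_one_sub_mul_expNegIntegral hcont hint hr)]
  simp

theorem expNegIntegral_eq_mul_exp (hcont : ContinuousOn ξ (Ici 0))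
    (hint : IntervalIntegrable (fun s => ξ s / s) volume 0 1) (hr : 0 ≤ r) :
    expNegIntegral ξ r = expNegIntegral ξ 1 * exp (-∫ s in (1:ℝ)..r, ξ s / s) := by
  rw [expNegIntegral, expNegIntegral, ← exp_add, ← integral_add_adjacent_intervals hint
    (hint.symm.trans (intervalIntegrable_div_self hcont hint hr))]
  ring_nf

theorem mul_rpow_neg_le_expNegIntegral (hcont : ContinuousOn ξ (Ici 0))
    (hint : IntervalIntegrable (fun s => ξ s / s) volume 0 1) {a : ℝ} (hξa : ∀ s, ξ s ≤ a)
    (hr : 1 ≤ r) : expNegIntegral ξ 1 * r ^ (-a) ≤ expNegIntegral ξ r := by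
  have hr0 : 0 < r := one_pos.trans_le hr
  have hle := integral_div_self_le_mul_log hr
    (hint.symm.trans (intervalIntegrable_div_self hcont hint hr0.le)) fun s _ => hξa s
  rw [expNegIntegral_eq_mul_exp hcont hint hr0.le, rpow_def_of_pos hr0]
  exact mul_le_mul_of_nonneg_left (exp_le_exp.2 (by linarith)) expNegIntegral_pos.le

theorem expNegIntegral_le_mul_rpow_neg (hcont : ContinuousOn ξ (Ici 0))
    (hint : IntervalIntegrable (fun s => ξ s / s) volume 0 1) (hmono : Monotone ξ)
    (hr : 1 ≤ r) : expNegIntegral ξ r ≤ expNegIntegral ξ 1 * r ^ (-ξ 1) := by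
  have hr0 : 0 < r := one_pos.trans_le hr
  have hge := mul_log_le_integral_div_self hr
    (hint.symm.trans (intervalIntegrable_div_self hcont hint hr0.le)) fun s hs => hmono hs.1
  rw [expNegIntegral_eq_mul_exp hcont hint hr0.le, rpow_def_of_pos hr0]
  exact mul_le_mul_of_nonneg_left (exp_le_exp.2 (by linarith)) expNegIntegral_pos.le

theorem tendsto_expNegIntegral_atTop (hcont : ContinuousOn ξ (Ici 0))
    (hint : IntervalIntegrable (fun s => ξ s / s) volume 0 1) (hmono : Monotone ξ)
    (hξ1 : 0 < ξ 1) : Tendsto (expNegIntegral ξ) atTop (𝓝 0) := by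
  have hup : Tendsto (fun r => expNegIntegral ξ 1 * r ^ (-ξ 1)) atTop (𝓝 0) := by
    simpa using (tendsto_rpow_neg_atTop hξ1).const_mul (expNegIntegral ξ 1)
  exact tendsto_of_tendsto_of_tendsto_of_le_of_le' tendsto_const_nhds hup
    (Eventually.of_forall fun _ => expNegIntegral_pos.le)
    ((eventually_ge_atTop 1).mono fun _ hr => expNegIntegral_le_mul_rpow_neg hcont hint hmono hr)

theorem tendsto_integral_expNegIntegral_atTop (hcont : ContinuousOn ξ (Ici 0))
    (hint : IntervalIntegrable (fun s => ξ s / s) volume 0 1) {a : ℝ} (hξa : ∀ s, ξ s ≤ a)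
    (ha1 : a < 1) : Tendsto (fun r => ∫ s in (0:ℝ)..r, expNegIntegral ξ s) atTop atTop := by
  have hlow : ∀ r, 1 ≤ r →
      expNegIntegral ξ 1 * ((r ^ (1 - a) - 1) / (1 - a)) ≤
        ∫ s in (0:ℝ)..r, expNegIntegral ξ s := by
    intro r hr
    have hE0r := intervalIntegrable_expNegIntegral hcont hint (zero_le_one.trans hr)
    have hE01 := intervalIntegrable_expNegIntegral hcont hint zero_le_one
    calc expNegIntegral ξ 1 * ((r ^ (1 - a) - 1) / (1 - a))
        = ∫ s in (1:ℝ)..r, expNegIntegral ξ 1 * s ^ (-a) := by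
          rw [intervalIntegral.integral_const_mul, integral_rpow (Or.inl (by linarith)),
            one_rpow, neg_add_eq_sub]
      _ ≤ ∫ s in (1:ℝ)..r, expNegIntegral ξ s :=
          integral_mono_on hr (((continuousOn_const.mul (continuousOn_id.rpow_const
            fun s hs => Or.inl (one_pos.trans_le hs.1).ne'))).intervalIntegrable_of_Icc hr)
            (hE01.symm.trans hE0r) fun s hs => mul_rpow_neg_le_expNegIntegral hcont hint hξa hs.1
      _ ≤ ∫ s in (0:ℝ)..r, expNegIntegral ξ s := by
          rw [← integral_add_adjacent_intervals hE01 (hE01.symm.trans hE0r)]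
          exact le_add_of_nonneg_left (integral_nonneg zero_le_one fun _ _ => expNegIntegral_pos.le)
  refine tendsto_atTop_mono' atTop (eventually_atTop.2 ⟨1, hlow⟩) ?_
  simpa only [← sub_eq_add_neg] using ((tendsto_atTop_add_const_right _ (-1)
    (tendsto_rpow_atTop (sub_pos.2 ha1))).atTop_div_const (sub_pos.2 ha1)).const_mul_atTop
    expNegIntegral_pos

end expNegIntegral

theorem stmt_6_general (ξ : ℝ → ℝ) (hcont : ContinuousOn ξ (Set.Ici 0))
    (hξ : ∀ r > 0, 0 < ξ r ∧ ξ r < 1)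
    (hmono : Monotone ξ)
    (a : ℝ) (ha1 : a < 1)
    (hlim : Tendsto ξ atTop (nhds a))
    (hint : IntervalIntegrable (fun s => ξ s / s) MeasureTheory.volume 0 1)
    (h : ℝ → ℝ)
    (hh : ∀ r, h r = Real.exp (-(∫ s in (0:ℝ)..r, ξ s / s))) :
    Tendsto h atTop (nhds 0)
    ∧ Tendsto (fun r => ∫ s in (0:ℝ)..r, h s) atTop atTop
    ∧ Tendsto (fun r => r * h r / ∫ s in (0:ℝ)..r, h s) atTop (nhds (1 - a)) := by
  obtain rfl : h = expNegIntegral ξ := funext hh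
  have hξa : ∀ s, ξ s ≤ a := hmono.ge_of_tendsto hlim
  have hmass := tendsto_integral_expNegIntegral_atTop hcont hint hξa ha1
  refine ⟨tendsto_expNegIntegral_atTop hcont hint hmono (hξ 1 one_pos).1, hmass, ?_⟩
  refine ((tendsto_const_nhds.sub hlim).integral_mul_div_integral
    (fun _ _ => expNegIntegral_pos.le)
    (fun _ hr => intervalIntegrable_one_sub_mul_expNegIntegral hcont hint hr)
    (fun _ hr => intervalIntegrable_expNegIntegral hcont hint hr) hmass).congr' ?_
  filter_upwards [eventually_ge_atTop 0] with r hr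
  rw [mul_expNegIntegral_eq_integral hcont hint hr]

/-- asymptotics of `h(r) = exp(−∫₀^r ξ(s)/s ds)` when
`ξ ↗ a ∈ (0,1)`: `h → 0`, `∫₀^r h → ∞`, and `r h / ∫₀^r h → 1 − a`. -/
theorem stmt_6 (ξ : ℝ → ℝ) (hcont : ContinuousOn ξ (Set.Ici 0))
    (hξ0 : ξ 0 = 0) (hξ : ∀ r > 0, 0 < ξ r ∧ ξ r < 1)
    (hmono : Monotone ξ)
    (a : ℝ) (ha : 0 < a) (ha1 : a < 1)
    (hlim : Tendsto ξ atTop (nhds a))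
    (hint : IntervalIntegrable (fun s => ξ s / s) MeasureTheory.volume 0 1)
    (h : ℝ → ℝ)
    (hh : ∀ r, h r = Real.exp (-(∫ s in (0:ℝ)..r, ξ s / s))) :
    Tendsto h atTop (nhds 0)
    ∧ Tendsto (fun r => ∫ s in (0:ℝ)..r, h s) atTop atTop
    ∧ Tendsto (fun r => r * h r / ∫ s in (0:ℝ)..r, h s) atTop (nhds (1 - a)) :=
  stmt_6_general ξ hcont hξ hmono a ha1 hlim hint h hh
end

section
/- There exists a real number a > 0 with 2/3 < a² < 45/64 such that simultaneously: (i) 1 − 2at + t² > 0 for all t ∈ (0,∞); (ii) 1 − 4at + 3t² > 0 for all t ∈ (0,∞); (iii) 3 − 16at + 15t² > 0 for all t ∈ (0,∞); (iv) 2 − 8at + 7t² > 0 for all t ∈ (0,∞); and (v) there exists t > 0 with 1 − 6at + 6t² < 0. -/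
/-- existence of a parameter `a` with `2/3 < a² < 45/64` making
four quadratics positive on `(0,∞)` while a fifth one is negative somewhere. -/
theorem stmt_8 :
    ∃ a : ℝ, 0 < a ∧ 2 / 3 < a ^ 2 ∧ a ^ 2 < 45 / 64
      ∧ (∀ t : ℝ, 0 < t → 0 < 1 - 2 * a * t + t ^ 2)
      ∧ (∀ t : ℝ, 0 < t → 0 < 1 - 4 * a * t + 3 * t ^ 2)
      ∧ (∀ t : ℝ, 0 < t → 0 < 3 - 16 * a * t + 15 * t ^ 2)
      ∧ (∀ t : ℝ, 0 < t → 0 < 2 - 8 * a * t + 7 * t ^ 2)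
      ∧ (∃ t : ℝ, 0 < t ∧ 1 - 6 * a * t + 6 * t ^ 2 < 0) := by
  refine ⟨83/100, by norm_num, by norm_num, by norm_num, ?_, ?_, ?_, ?_, ⟨83/200, by norm_num, by norm_num⟩⟩
  · intro t ht; nlinarith [sq_nonneg (t - 83/100)]
  · intro t ht; nlinarith [sq_nonneg (3*t - 166/100)]
  · intro t ht; nlinarith [sq_nonneg (15*t - 8*83/100)]
  · intro t ht; nlinarith [sq_nonneg (7*t - 4*83/100)]
end
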